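/- arXiv:2307.02598 — 3 statements merged into one kernel-verified Lean document; each statement's English description precedes it below -/
import Mathlib

section
/- Let 𝒞 be a connected topological space and M : 𝒞 → ℝ^{d×d} a continuous map such that M(c) is a B-block permutation matrix for every c ∈ 𝒞. Then there exists a single B-respecting permutation π such that for all c ∈ 𝒞 and all distinct blocks B, B' ∈ 𝓑, the submatrix M(c)_{π(B'), B} = 0. -/
/-- `M` is block diagonal w.r.t. the block-assignment `b`. -/
def BlockDiag {d : ℕ} {ι : Type*} (b : Fin d → ι) (M : Matrix (Fin d) (Fin d) ℝ) : Prop :=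
  ∀ i j, b i ≠ b j → M i j = 0

/-- The permutation matrix of `π`, i.e. `P e_j = e_{π j}`. -/
def PermMat {d : ℕ} (π : Equiv.Perm (Fin d)) : Matrix (Fin d) (Fin d) ℝ :=
  fun i j => if π j = i then 1 else 0

/-- `π` respects the blocks (fibers of `b`). -/
def RespectsBlocks {d : ℕ} {ι : Type*} (b : Fin d → ι) (π : Equiv.Perm (Fin d)) : Prop :=
  ∀ i j, b i = b j ↔ b (π i) = b (π j)

/-- `A` is a `B`-block permutation matrix: invertible and of the form `C * P_π` with
`π` a `B`-respecting permutation and `C` block diagonal. -/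
def IsBlockPermMat {d : ℕ} {ι : Type*} (b : Fin d → ι)
    (A : Matrix (Fin d) (Fin d) ℝ) : Prop :=
  IsUnit A ∧ ∃ π : Equiv.Perm (Fin d), RespectsBlocks b π ∧
    ∃ C, BlockDiag b C ∧ A = C * PermMat π

/-!
For a block permutation matrix `A = C * P_π`, the entry `A i j` equals `C i (π j)`, so it can only
be nonzero when `i` lies in the block of `π j`. Every column of an invertible matrix has a nonzero
entry, hence the block map `j ↦ b (π j)` is determined by `A` itself. Along a continuous family, a
nonzero entry stays nonzero nearby, so the block map is locally constant, hence constant on a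
connected space; any one of the permutations then works for the whole family.
-/

open Filter

lemma Matrix.exists_apply_ne_zero_of_isUnit {n R : Type*} [Fintype n] [DecidableEq n]
    [CommRing R] [Nontrivial R] {A : Matrix n n R} (hA : IsUnit A) (j : n) :
    ∃ i, A i j ≠ 0 := by
  by_contra! h
  have hdet : IsUnit A.det := (Matrix.isUnit_iff_isUnit_det A).mp hA
  rw [Matrix.det_eq_zero_of_column_eq_zero j h] at hdet
  exact not_isUnit_zero hdet

lemma mul_permMat_apply {d : ℕ} (C : Matrix (Fin d) (Fin d) ℝ) (π : Equiv.Perm (Fin d))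
    (i j : Fin d) : (C * PermMat π) i j = C i (π j) := by
  classical
  simp [Matrix.mul_apply, PermMat]

lemma BlockDiag.eq_of_mul_permMat_apply_ne_zero {d : ℕ} {ι : Type*} {b : Fin d → ι}
    {C : Matrix (Fin d) (Fin d) ℝ} (hC : BlockDiag b C) (π : Equiv.Perm (Fin d)) {i j : Fin d}
    (h : (C * PermMat π) i j ≠ 0) : b i = b (π j) := by
  rw [mul_permMat_apply] at h
  by_contra hb
  exact h (hC i (π j) hb)

lemma isLocallyConstant_comp_perm_of_continuous {d : ℕ} {ι : Type*} {b : Fin d → ι}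
    {X : Type*} [TopologicalSpace X] {M : X → Matrix (Fin d) (Fin d) ℝ} (hM : Continuous M)
    (hunit : ∀ x, IsUnit (M x)) {π : X → Equiv.Perm (Fin d)} {C : X → Matrix (Fin d) (Fin d) ℝ}
    (hC : ∀ x, BlockDiag b (C x)) (hMC : ∀ x, M x = C x * PermMat (π x)) :
    IsLocallyConstant fun x => b ∘ π x := by
  have hblock : ∀ x i j, M x i j ≠ 0 → b i = b (π x j) := fun x i j h =>
    (hC x).eq_of_mul_permMat_apply_ne_zero (π x) (hMC x ▸ h)
  rw [IsLocallyConstant.iff_eventually_eq]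
  intro x
  simp only [funext_iff, Function.comp_apply, eventually_all]
  intro j
  obtain ⟨i, hi⟩ := Matrix.exists_apply_ne_zero_of_isUnit (hunit x) j
  have hcont : Continuous fun y => M y i j := (continuous_apply_apply i j).comp hM
  filter_upwards [hcont.continuousAt.eventually_ne hi] with y hy
  rw [← hblock y i j hy, ← hblock x i j hi]

/-- If `𝒞` is connected and `M : 𝒞 → ℝ^{d×d}` is continuous with `M c` a `B`-block
permutation matrix for every `c`, then there is a single `B`-respecting permutation `π`
such that for all `c` and all indices `i, j` in distinct blocks, `M c (π i) j = 0`
(i.e. the submatrix `M(c)_{π(B'),B}` vanishes for distinct blocks `B ≠ B'`). -/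
theorem stmt13 {d : ℕ} {ι : Type*} (b : Fin d → ι)
    {𝒞 : Type*} [TopologicalSpace 𝒞] (hconn : ConnectedSpace 𝒞)
    (M : 𝒞 → Matrix (Fin d) (Fin d) ℝ) (hM : Continuous M)
    (hblock : ∀ c, IsBlockPermMat b (M c)) :
    ∃ π : Equiv.Perm (Fin d), RespectsBlocks b π ∧
      ∀ c, ∀ i j : Fin d, b i ≠ b j → M c (π i) j = 0 := by
  choose hunit π hπ C hC hMC using hblock
  obtain ⟨c₀⟩ := hconn.toNonempty
  have hconst : ∀ c, b ∘ π c = b ∘ π c₀ := fun c =>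
    (isLocallyConstant_comp_perm_of_continuous hM hunit hC hMC).apply_eq_of_isPreconnected
      hconn.isPreconnected_univ trivial trivial
  refine ⟨π c₀, hπ c₀, fun c i j hij => ?_⟩
  by_contra h
  rw [hMC c] at h
  have hblock : b (π c₀ i) = b (π c j) := (hC c).eq_of_mul_permMat_apply_ne_zero (π c) h
  have hj : b (π c j) = b (π c₀ j) := congrFun (hconst c) j
  exact hij ((hπ c₀ i j).mpr (hblock.trans hj))
end

section
/- Suppose the learned additive decoder satisfies f̂^{(B)}(z_B) = f^{(π(B))}(v̄_{π(B)}(z_B)) + c^{(B)} for all z_B in Ẑ^train_B, for every block B, with Σ_B c^{(B)} = 0. Then the equality of full decoders f̂(z) = f ∘ v̄(z) extends from Ẑ^train to the Cartesian-product extension CPE_𝓑(Ẑ^train) := Π_{B∈𝓑} Ẑ^train_B, where v̄ concatenates the block maps v̄_{π(B)}. Moreover f̂(CPE_𝓑(Ẑ^train)) = f(CPE_𝓑(Z^train)) whenever each v̄_{π(B)} is a bijection from Ẑ^train_B onto Z^train_{π(B)}. -/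
/-!
Summing the blockwise identities `F̂_B = F_{π(B)} ∘ v̄_B + c_B` over the blocks, the constants
cancel; since each identity only involves the coordinate `z_B`, the sum is valid for every
combination of observed block values, i.e. on the whole Cartesian-product extension. For the
image statement, the block maps `v̄_B` assemble (after reindexing the blocks by `π`) into a map
sending `CPE(Ẑ^train)` onto `CPE(Z^train)`, and `f̂` factors through it as `f`.
-/

open Set

theorem Fintype.sum_eq_sum_of_eq_add_of_sum_eq_zero {ι M : Type*} [Fintype ι] [AddCommMonoid M]
    {f g c : ι → M} (h : ∀ i, f i = g i + c i) (hc : ∑ i, c i = 0) :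
    ∑ i, f i = ∑ i, g i := by
  rw [Finset.sum_congr rfl fun i _ => h i, Finset.sum_add_distrib, hc, add_zero]

section piCongrLeft

variable {ι κ : Type*} {α : ι → Type*} {γ : κ → Type*}

theorem Fintype.sum_piCongrLeft [Fintype ι] [Fintype κ] {M : Type*} [AddCommMonoid M]
    (e : ι ≃ κ) (g : ∀ k, γ k → M) (x : ∀ i, γ (e i)) :
    ∑ k, g k (e.piCongrLeft γ x k) = ∑ i, g (e i) (x i) :=
  (Fintype.sum_equiv e _ _ fun i => by rw [Equiv.piCongrLeft_apply_apply]).symm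

theorem Equiv.image_piCongrLeft_piMap_univ_pi (e : ι ≃ κ) {v : ∀ i, α i → γ (e i)}
    {s : ∀ i, Set (α i)} {t : ∀ k, Set (γ k)} (h : ∀ i, v i '' s i = t (e i)) :
    (e.piCongrLeft γ ∘ Pi.map v) '' univ.pi s = univ.pi t := by
  rw [image_comp, piMap_image_univ_pi, funext h, ← piCongrLeft_preimage_univ_pi,
    Equiv.image_preimage]

end piCongrLeft

theorem stmt18_general {dx : ℕ} {ι : Type*} [Fintype ι]
    (β : ι → Type*)
    (Zhat Z : Set (∀ B, β B → ℝ))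
    (π : Equiv.Perm ι)
    (F Fhat : ∀ B : ι, (β B → ℝ) → (Fin dx → ℝ))
    (vbar : ∀ B : ι, (β B → ℝ) → (β (π B) → ℝ))
    (c : ι → Fin dx → ℝ)
    (s : (Fin dx → ℝ) → (Fin dx → ℝ))
    (hblock : ∀ B : ι, ∀ zB ∈ (fun w => w B) '' Zhat,
      Fhat B zB = F (π B) (vbar B zB) + c B)
    (hc : ∑ B, c B = 0) :
    (∀ z : ∀ B, β B → ℝ, (∀ B, z B ∈ (fun w => w B) '' Zhat) →
      s (∑ B, Fhat B (z B)) = s (∑ B, F (π B) (vbar B (z B)))) ∧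
    ((∀ B, Set.BijOn (vbar B) ((fun w => w B) '' Zhat) ((fun w => w (π B)) '' Z)) →
      (fun z : ∀ B, β B → ℝ => s (∑ B, Fhat B (z B))) ''
          {z | ∀ B, z B ∈ (fun w => w B) '' Zhat}
        = (fun z : ∀ B, β B → ℝ => s (∑ B, F B (z B))) ''
          {z | ∀ B, z B ∈ (fun w => w B) '' Z}) := by
  have hsum (z : ∀ B, β B → ℝ) (hz : ∀ B, z B ∈ (fun w => w B) '' Zhat) :
      ∑ B, Fhat B (z B) = ∑ B, F (π B) (vbar B (z B)) :=
    Fintype.sum_eq_sum_of_eq_add_of_sum_eq_zero (fun B => hblock B (z B) (hz B)) hc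
  refine ⟨fun z hz => congrArg s (hsum z hz), fun hbij => ?_⟩
  have hCPE (W : Set (∀ B, β B → ℝ)) :
      {z | ∀ B, z B ∈ (fun w => w B) '' W} = univ.pi fun B => (fun w => w B) '' W :=
    ext fun _ => mem_univ_pi.symm
  calc _ = (fun w => s (∑ B, F B (w B))) ∘ (π.piCongrLeft (fun B => β B → ℝ) ∘ Pi.map vbar) ''
        {z | ∀ B, z B ∈ (fun w => w B) '' Zhat} :=
        image_congr fun z hz => by
          simp only [Function.comp_apply, Fintype.sum_piCongrLeft, Pi.map_apply, hsum z hz]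
    _ = _ := by
      rw [image_comp, hCPE, hCPE,
        π.image_piCongrLeft_piMap_univ_pi (t := fun B => (fun w => w B) '' Z)
          fun B => (hbij B).image_eq]

/-- Cartesian-product extrapolation. Latents are modeled as dependent functions
`z : ∀ B, β B → ℝ` (one sub-vector per block `B`); the projection of a set `W` onto
block `B` is `(fun w => w B) '' W`, and the Cartesian-product extension `CPE(W)` is
`{z | ∀ B, z B ∈ W_B}`. Suppose each learned block decoder imitates a ground-truth
block decoder: `F̂_B(z_B) = F_{π(B)}(v̄_B(z_B)) + c_B` on `Ẑ^train_B`, with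
`∑_B c_B = 0`. Then the full decoders with outer invertible map `s` agree on all of
`CPE(Ẑ^train)`, and if moreover each `v̄_B` is a bijection from `Ẑ^train_B` onto
`Z^train_{π(B)}`, then `f̂(CPE(Ẑ^train)) = f(CPE(Z^train))`. -/
theorem stmt18 {dx : ℕ} {ι : Type*} [Fintype ι]
    (β : ι → Type*)
    (Zhat Z : Set (∀ B, β B → ℝ))
    (π : Equiv.Perm ι)
    (F Fhat : ∀ B : ι, (β B → ℝ) → (Fin dx → ℝ))
    (vbar : ∀ B : ι, (β B → ℝ) → (β (π B) → ℝ))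
    (c : ι → Fin dx → ℝ)
    (s : (Fin dx → ℝ) → (Fin dx → ℝ)) (hs : Function.Bijective s)
    (hblock : ∀ B : ι, ∀ zB ∈ (fun w => w B) '' Zhat,
      Fhat B zB = F (π B) (vbar B zB) + c B)
    (hc : ∑ B, c B = 0) :
    (∀ z : ∀ B, β B → ℝ, (∀ B, z B ∈ (fun w => w B) '' Zhat) →
      s (∑ B, Fhat B (z B)) = s (∑ B, F (π B) (vbar B (z B)))) ∧
    ((∀ B, Set.BijOn (vbar B) ((fun w => w B) '' Zhat) ((fun w => w (π B)) '' Z)) →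
      (fun z : ∀ B, β B → ℝ => s (∑ B, Fhat B (z B))) ''
          {z | ∀ B, z B ∈ (fun w => w B) '' Zhat}
        = (fun z : ∀ B, β B → ℝ => s (∑ B, F B (z B))) ''
          {z | ∀ B, z B ∈ (fun w => w B) '' Z}) :=
  stmt18_general β Zhat Z π F Fhat vbar c s hblock hc
end

section
/- Assume for each block B of the partition 𝓑 and any two distinct z_B, z'_B in Z_B there exists z_{B^c} with (z_B, z_{B^c}) ∈ Z and (z'_B, z_{B^c}) ∈ Z. If the sum map z ↦ Σ_{B∈𝓑} f^{(B)}(z_B) is injective on Z, then each f^{(B)} is injective on Z_B. -/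
open Set

section BlockDecoder

variable {ι M : Type*} [Fintype ι] [AddCommMonoid M] {α : ι → Type*}

lemma blockSum_eq_of_eq_of_forall_ne {F : ∀ i, α i → M} {z z' : ∀ i, α i} {i : ι}
    (hi : F i (z i) = F i (z' i)) (hne : ∀ j ≠ i, z j = z' j) :
    ∑ j, F j (z j) = ∑ j, F j (z' j) := by
  classical
  refine Finset.sum_congr rfl fun j _ => ?_
  by_cases hj : j = i
  · subst hj; exact hi
  · rw [hne j hj]

lemma Set.InjOn.eq_of_blockDecoder_eq {Z : Set (∀ i, α i)} {F : ∀ i, α i → M}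
    (hinj : InjOn (fun z => ∑ j, F j (z j)) Z) {z z' : ∀ i, α i} (hz : z ∈ Z) (hz' : z' ∈ Z)
    {i : ι} (hne : ∀ j ≠ i, z j = z' j) (hi : F i (z i) = F i (z' i)) : z i = z' i :=
  congrFun (hinj hz hz' (blockSum_eq_of_eq_of_forall_ne hi hne)) i

theorem Set.InjOn.injOn_blockDecoder {Z : Set (∀ i, α i)} {F : ∀ i, α i → M}
    (hinj : InjOn (fun z => ∑ j, F j (z j)) Z) (i : ι)
    (hcov : ∀ a ∈ (fun w => w i) '' Z, ∀ a' ∈ (fun w => w i) '' Z, a ≠ a' →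
      ∃ z ∈ Z, ∃ z' ∈ Z, z i = a ∧ z' i = a' ∧ ∀ j ≠ i, z j = z' j) :
    InjOn (F i) ((fun w => w i) '' Z) := by
  intro a ha a' ha' hF
  by_contra hneq
  obtain ⟨z, hz, z', hz', rfl, rfl, hne⟩ := hcov a ha a' ha' hneq
  exact hneq (hinj.eq_of_blockDecoder_eq hz hz' hne hF)

end BlockDecoder

/-- Latents are modeled as dependent functions `z : ∀ B, β B → ℝ` (one sub-vector per
block). Assume that for each block `B`, any two distinct values `z_B ≠ z'_B` in the
projection `Z_B` of `Z` can be completed by a common value of the remaining blocks: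
there are `z, z' ∈ Z` with `z B = z_B`, `z' B = z'_B`, and `z B' = z' B'` for all
`B' ≠ B`. If the sum map `z ↦ ∑_B F_B(z_B)` is injective on `Z`, then every block
decoder `F_B` is injective on `Z_B`. -/
theorem stmt19 {dx : ℕ} {ι : Type*} [Fintype ι]
    (β : ι → Type*) (Z : Set (∀ B, β B → ℝ))
    (F : ∀ B : ι, (β B → ℝ) → (Fin dx → ℝ))
    (hcov : ∀ B : ι, ∀ zB ∈ (fun w => w B) '' Z, ∀ zB' ∈ (fun w => w B) '' Z,
      zB ≠ zB' → ∃ z ∈ Z, ∃ z' ∈ Z, z B = zB ∧ z' B = zB' ∧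
        ∀ B' ≠ B, z B' = z' B')
    (hinj : Set.InjOn (fun z : ∀ B, β B → ℝ => ∑ B, F B (z B)) Z) :
    ∀ B : ι, Set.InjOn (F B) ((fun w => w B) '' Z) :=
  fun B => hinj.injOn_blockDecoder B (hcov B)
end
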